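/- arXiv:math/0108044 — 2 statements merged into one kernel-verified Lean document; each statement's English description precedes it below -/
import Mathlib

section
/- Let ℓ₀ be a Lagrangian subspace of ℝⁿ ⊕ (ℝⁿ)* with the canonical symplectic form. Then there exists a unique pair (P, S), where P ⊆ ℝⁿ is a subspace and S : P × P → ℝ is a symmetric bilinear form, such that ℓ₀ = {(v, α) : v ∈ P and α|_P + S(v, ·) = 0 in P*}. -/
/-!
Let `P` be the projection of `ℓ` to `V` and `A = {β | (0, β) ∈ ℓ}`. Isotropy gives `A ⊆ P°`, and
rank–nullity for `ℓ → P` gives `dim P + dim A = dim ℓ = dim V = dim P + dim P°`, so `A = P°`.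
Hence for `(v, α) ∈ ℓ` the restriction `α|_P` depends only on `v`, and choosing a linear section
`v ↦ (v, β_v)` of `ℓ → P` one sets `S(v, w) = -β_v(w)`; it is symmetric because `ω` vanishes
on `ℓ`. A pair `(Q, T)` is recovered from the set it describes: `Q` is its projection (every
functional on `Q` extends to `V`), and then `T` is read off from any point over `v`.
-/

open Module

section ProdRank

variable {K V W : Type*} [Field K] [AddCommGroup V] [Module K V] [AddCommGroup W] [Module K W]

theorem Submodule.finrank_map_fst_add_finrank_comap_inr (ℓ : Submodule K (V × W))
    [FiniteDimensional K ℓ] :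
    finrank K (ℓ.map (LinearMap.fst K V W)) + finrank K (ℓ.comap (LinearMap.inr K V W)) =
      finrank K ℓ := by
  let g := (LinearMap.fst K V W).domRestrict ℓ
  let h : ℓ.comap (LinearMap.inr K V W) →ₗ[K] ℓ := (LinearMap.inr K V W).restrict fun _ hx ↦ hx
  have h_inj : Function.Injective h := fun x y hxy ↦
    Subtype.ext (congrArg (fun z : ℓ ↦ (z : V × W).2) hxy)
  have h_range : LinearMap.range h = LinearMap.ker g := by
    ext ⟨⟨v, β⟩, hz⟩
    constructor
    · rintro ⟨b, hb⟩
      simp [g, ← hb, h]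
    · intro (hv : v = 0)
      subst hv
      exact ⟨⟨β, hz⟩, rfl⟩
  rw [← LinearMap.finrank_range_add_finrank_ker g, LinearMap.range_domRestrict, ← h_range,
    LinearMap.finrank_range_of_inj h_inj]

end ProdRank

namespace Lagrangian

variable {K V : Type*} [Field K] [AddCommGroup V] [Module K V]

def IsIsotropic (ℓ : Submodule K (V × Dual K V)) : Prop :=
  ∀ z ∈ ℓ, ∀ w ∈ ℓ, w.2 z.1 = z.2 w.1

abbrev base (ℓ : Submodule K (V × Dual K V)) : Submodule K V :=
  ℓ.map (LinearMap.fst K V (Dual K V))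

def ofForm (Q : Submodule K V) (T : Q →ₗ[K] Q →ₗ[K] K) : Set (V × Dual K V) :=
  {z | ∃ hv : z.1 ∈ Q, ∀ w : Q, z.2 w + T ⟨z.1, hv⟩ w = 0}

theorem mem_base_iff_exists_mem_ofForm {Q : Submodule K V} (T : Q →ₗ[K] Q →ₗ[K] K) (v : V) :
    v ∈ Q ↔ ∃ α : Dual K V, (v, α) ∈ ofForm Q T := by
  refine ⟨fun hv ↦ ?_, fun ⟨_, hv, _⟩ ↦ hv⟩
  obtain ⟨γ, hγ⟩ := LinearMap.exists_extend (-T ⟨v, hv⟩)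
  refine ⟨γ, hv, fun w ↦ ?_⟩
  have hγw : γ w = -T ⟨v, hv⟩ w := LinearMap.congr_fun hγ w
  exact hγw ▸ neg_add_cancel _

theorem ofForm_injective {Q Q' : Submodule K V} {T : Q →ₗ[K] Q →ₗ[K] K}
    {T' : Q' →ₗ[K] Q' →ₗ[K] K} (h : ofForm Q T = ofForm Q' T') :
    (⟨Q, T⟩ : (Q : Submodule K V) × (Q →ₗ[K] Q →ₗ[K] K)) = ⟨Q', T'⟩ := by
  obtain rfl : Q = Q' := by
    ext v
    rw [mem_base_iff_exists_mem_ofForm T, mem_base_iff_exists_mem_ofForm T', h]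
  obtain rfl : T = T' := by
    ext v w
    obtain ⟨α, hα⟩ := (mem_base_iff_exists_mem_ofForm T v).1 v.2
    have hα' : _ ∈ ofForm Q T' := h ▸ hα
    obtain ⟨_, hT⟩ := hα
    obtain ⟨_, hT'⟩ := hα'
    linear_combination hT w - hT' w
  rfl

variable {ℓ : Submodule K (V × Dual K V)}

theorem comap_inr_le_dualAnnihilator (hℓ : IsIsotropic ℓ) :
    ℓ.comap (LinearMap.inr K V (Dual K V)) ≤ (base ℓ).dualAnnihilator := by
  intro β hβ
  rw [Submodule.mem_dualAnnihilator]
  rintro _ ⟨z, hz, rfl⟩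
  simpa using (hℓ _ hβ z hz).symm

theorem comap_inr_eq_dualAnnihilator [FiniteDimensional K V] (hℓ : IsIsotropic ℓ)
    (hdim : finrank K ℓ = finrank K V) :
    ℓ.comap (LinearMap.inr K V (Dual K V)) = (base ℓ).dualAnnihilator := by
  refine Submodule.eq_of_le_of_finrank_le (comap_inr_le_dualAnnihilator hℓ) ?_
  have h₁ : finrank K (base ℓ) + finrank K (ℓ.comap (LinearMap.inr K V (Dual K V))) =
      finrank K ℓ := ℓ.finrank_map_fst_add_finrank_comap_inr
  have h₂ := Subspace.finrank_add_finrank_dualAnnihilator_eq (base ℓ)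
  omega

theorem apply_eq_of_mem (hℓ : IsIsotropic ℓ) {v : V} {α β : Dual K V} (hα : (v, α) ∈ ℓ)
    (hβ : (v, β) ∈ ℓ) {w : V} (hw : w ∈ base ℓ) : α w = β w := by
  have hdiff : (0, α - β) ∈ ℓ := by
    rw [← sub_self v]
    exact ℓ.sub_mem hα hβ
  have := (Submodule.mem_dualAnnihilator (α - β)).1 (comap_inr_le_dualAnnihilator hℓ hdiff) w hw
  rwa [LinearMap.sub_apply, sub_eq_zero] at this

variable (ℓ) in
noncomputable def lift : base ℓ →ₗ[K] ℓ :=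
  (LinearMap.exists_rightInverse_of_surjective (LinearMap.submoduleMap _ ℓ)
    (LinearMap.range_eq_top.2 (LinearMap.submoduleMap_surjective _ ℓ))).choose

@[simp]
theorem fst_lift (v : base ℓ) : (lift ℓ v : V × Dual K V).1 = v :=
  congrArg Subtype.val <| LinearMap.congr_fun
    (LinearMap.exists_rightInverse_of_surjective (LinearMap.submoduleMap _ ℓ)
      (LinearMap.range_eq_top.2 (LinearMap.submoduleMap_surjective _ ℓ))).choose_spec v

theorem mk_snd_lift_mem (v : base ℓ) : ((v : V), (lift ℓ v : V × Dual K V).2) ∈ ℓ := by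
  rw [← fst_lift v]
  exact (lift ℓ v).2

variable (ℓ) in
noncomputable def form : base ℓ →ₗ[K] base ℓ →ₗ[K] K :=
  -((base ℓ).subtype.dualMap ∘ₗ LinearMap.snd K V (Dual K V) ∘ₗ ℓ.subtype ∘ₗ lift ℓ)

theorem form_apply (v w : base ℓ) : form ℓ v w = -(lift ℓ v : V × Dual K V).2 w := rfl

theorem form_symm (hℓ : IsIsotropic ℓ) (v w : base ℓ) : form ℓ v w = form ℓ w v := by
  rw [form_apply, form_apply, hℓ _ (mk_snd_lift_mem v) _ (mk_snd_lift_mem w)]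

theorem coe_eq_ofForm [FiniteDimensional K V] (hℓ : IsIsotropic ℓ)
    (hdim : finrank K ℓ = finrank K V) : (ℓ : Set (V × Dual K V)) = ofForm (base ℓ) (form ℓ) := by
  ext ⟨v, α⟩
  constructor
  · intro hz
    have hv : v ∈ base ℓ := ⟨_, hz, rfl⟩
    refine ⟨hv, fun w ↦ ?_⟩
    rw [form_apply, apply_eq_of_mem hℓ hz (mk_snd_lift_mem ⟨v, hv⟩) w.2, add_neg_cancel]
  · rintro ⟨hv, hα⟩
    set β := (lift ℓ ⟨v, hv⟩ : V × Dual K V).2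
    have hdiff : (0, α - β) ∈ ℓ := by
      change α - β ∈ ℓ.comap (LinearMap.inr K V (Dual K V))
      rw [comap_inr_eq_dualAnnihilator hℓ hdim, Submodule.mem_dualAnnihilator]
      intro w hw
      simpa [form_apply, β, sub_eq_add_neg] using hα ⟨w, hw⟩
    have hsum := ℓ.add_mem hdiff (mk_snd_lift_mem ⟨v, hv⟩)
    rwa [Prod.mk_add_mk, zero_add, sub_add_cancel] at hsum

end Lagrangian

/-- every Lagrangian subspace `ℓ₀` of `ℝⁿ ⊕ (ℝⁿ)*` is determined by a unique
pair `(P, S)` with `P ⊆ ℝⁿ` a subspace and `S` a symmetric bilinear form on `P`, via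
`ℓ₀ = {(v,α) : v ∈ P, α|_P + S(v,·) = 0}`. -/
theorem lagrangian_eq_pair_P_S (n : ℕ)
    (ω : ((Fin n → ℝ) × Module.Dual ℝ (Fin n → ℝ)) →
         ((Fin n → ℝ) × Module.Dual ℝ (Fin n → ℝ)) → ℝ)
    (hω : ∀ z w, ω z w = w.2 z.1 - z.2 w.1)
    (ℓ₀ : Submodule ℝ ((Fin n → ℝ) × Module.Dual ℝ (Fin n → ℝ)))
    (hdim : Module.finrank ℝ ℓ₀ = n)
    (hiso : ∀ z ∈ ℓ₀, ∀ w ∈ ℓ₀, ω z w = 0) :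
    ∃! PS : (P : Submodule ℝ (Fin n → ℝ)) × (↥P →ₗ[ℝ] ↥P →ₗ[ℝ] ℝ),
      (∀ x y : ↥PS.1, PS.2 x y = PS.2 y x) ∧
      (∀ (v : Fin n → ℝ) (α : Module.Dual ℝ (Fin n → ℝ)),
        (v, α) ∈ ℓ₀ ↔ ∃ hv : v ∈ PS.1, ∀ w : ↥PS.1, α w + PS.2 ⟨v, hv⟩ w = 0) := by
  have hℓ : Lagrangian.IsIsotropic ℓ₀ := fun z hz w hw ↦
    sub_eq_zero.1 (hω z w ▸ hiso z hz w hw)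
  have hℓ_eq := Lagrangian.coe_eq_ofForm hℓ (hdim.trans (finrank_fin_fun ℝ).symm)
  refine ⟨⟨Lagrangian.base ℓ₀, Lagrangian.form ℓ₀⟩,
    ⟨Lagrangian.form_symm hℓ, fun v α ↦ Set.ext_iff.1 hℓ_eq (v, α)⟩, ?_⟩
  rintro ⟨Q, T⟩ ⟨-, hQT⟩
  exact Lagrangian.ofForm_injective (hℓ_eq ▸ Set.ext fun z ↦ (hQT z.1 z.2).symm)
end

section
/- Let ℋ_red = {f ∈ H¹([a,b], ℝʳ) : f(a) = f(b) = 0} and let 𝔅 : [a,b] → Lin(ℝʳ, (ℝʳ)*) be a continuous family of invertible symmetric maps. Then the linear operator T : ℋ_red → L²([a,b], (ℝʳ)*)/Const, T(f) = 𝔅 f' mod Const, is a Fredholm operator of index zero, where Const is the r-dimensional subspace of constant maps. -/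
/-!
Write `M = ∫ₐᵇ 𝔅⁻¹`. If `𝔅 f'` is a constant `c`, then `f' = 𝔅⁻¹ c`, and for `f = ∫ₐᵗ 𝔅⁻¹ c`
the boundary condition `f b = 0` says exactly `M c = 0`; so `c ↦ ∫ₐᵗ 𝔅⁻¹ c` identifies `ker M`
with `ker T`. Dually, `h ↦ ∫ 𝔅⁻¹ h` maps `Const` onto `range M` and kills `range T` (as
`∫ₐᵇ f' = 0`), and every `h` whose image lies in `range M` is `𝔅 f'` modulo a constant; so it
induces an isomorphism of the cokernel of `T` with `ℝʳ ⧸ range M`. Rank–nullity for the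
endomorphism `M` of `ℝʳ` then gives index zero.
-/

open MeasureTheory Matrix

/-- The space `H¹₀([a,b], ℝʳ)` of `H¹` maps vanishing at `a` and `b` (extended by `0`
outside `[a,b]`): absolutely continuous maps which are primitives of an `L²` function. -/
noncomputable def H10 (r : ℕ) (a b : ℝ) : Submodule ℝ (ℝ → (Fin r → ℝ)) where
  carrier := {f | (∀ t, t ∉ Set.Icc a b → f t = 0) ∧ f b = 0 ∧
    ∃ g : ℝ → (Fin r → ℝ),
      MemLp g 2 (volume.restrict (Set.Icc a b)) ∧
      (∀ t ∈ Set.Icc a b, IntervalIntegrable g volume a t) ∧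
      ∀ t ∈ Set.Icc a b, f t = ∫ s in a..t, g s}
  add_mem' := by
    rintro f1 f2 ⟨h01, hb1, g1, hg1, hi1, hr1⟩ ⟨h02, hb2, g2, hg2, hi2, hr2⟩
    refine ⟨fun t ht => by simp [h01 t ht, h02 t ht], by simp [hb1, hb2],
      g1 + g2, hg1.add hg2, fun t ht => (hi1 t ht).add (hi2 t ht), fun t ht => ?_⟩
    have := intervalIntegral.integral_add (hi1 t ht) (hi2 t ht)
    simp only [Pi.add_apply, hr1 t ht, hr2 t ht]
    rw [← this]
  zero_mem' := by
    refine ⟨fun t _ => rfl, rfl, 0, ?_, fun t ht => ?_, fun t ht => ?_⟩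
    · simpa using (memLp_const (0 : Fin r → ℝ) (μ := volume.restrict (Set.Icc a b))
        (p := 2))
    · exact intervalIntegrable_const
    · simp
  smul_mem' := by
    rintro c f ⟨h0, hb, g, hg, hi, hr⟩
    refine ⟨fun t ht => by simp [h0 t ht], by simp [hb],
      c • g, hg.const_smul c, fun t ht => (hi t ht).smul c, fun t ht => ?_⟩
    simp only [Pi.smul_apply, hr t ht]
    rw [← intervalIntegral.integral_smul]

open Set Topology

theorem ContinuousOn.matrix_nonsing_inv {α n K : Type*} [TopologicalSpace α] [Fintype n]
    [DecidableEq n] [Field K] [TopologicalSpace K] [IsTopologicalRing K] [ContinuousInv₀ K]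
    {A : α → Matrix n n K} {s : Set α} (hA : ContinuousOn A s) (hinv : ∀ t ∈ s, IsUnit (A t)) :
    ContinuousOn (fun t => (A t)⁻¹) s := fun t ht =>
  (continuousAt_matrix_inv _ (by
    rw [Ring.inverse_eq_inv']
    exact continuousAt_inv₀ ((isUnit_iff_isUnit_det _).mp (hinv t ht)).ne_zero)
  ).comp_continuousWithinAt (hA t ht)

theorem Matrix.mulVec_nonsing_inv_mulVec {n K : Type*} [Fintype n] [DecidableEq n] [CommRing K]
    {A : Matrix n n K} (hA : IsUnit A) (v : n → K) : A *ᵥ (A⁻¹ *ᵥ v) = v := by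
  rw [mulVec_mulVec, mul_nonsing_inv _ ((isUnit_iff_isUnit_det A).mp hA), one_mulVec]

theorem Matrix.nonsing_inv_mulVec_mulVec {n K : Type*} [Fintype n] [DecidableEq n] [CommRing K]
    {A : Matrix n n K} (hA : IsUnit A) (v : n → K) : A⁻¹ *ᵥ (A *ᵥ v) = v := by
  rw [mulVec_mulVec, nonsing_inv_mul _ ((isUnit_iff_isUnit_det A).mp hA), one_mulVec]

theorem Matrix.continuous_toContinuousLinearMap_mulVecLin {m n : Type*} [Fintype m] [Fintype n] :
    Continuous fun A : Matrix m n ℝ => LinearMap.toContinuousLinearMap A.mulVecLin :=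
  LinearMap.continuous_of_finiteDimensional
    ((LinearMap.toContinuousLinearMap : ((n → ℝ) →ₗ[ℝ] m → ℝ) ≃ₗ[ℝ] _).toLinearMap ∘ₗ
      mulVecBilin ℝ ℝ)

theorem LinearMap.finrank_ker_eq_finrank_quotient_range {K V : Type*} [DivisionRing K]
    [AddCommGroup V] [Module K V] [FiniteDimensional K V] (f : V →ₗ[K] V) :
    Module.finrank K (LinearMap.ker f) = Module.finrank K (V ⧸ LinearMap.range f) := by
  have h := f.index_eq_of_finiteDimensional
  rw [LinearMap.index_eq_finrank_sub, sub_self] at h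
  omega

namespace MeasureTheory

section Lp

variable {α : Type*} [MeasurableSpace α] {μ : Measure α} {p : ENNReal}

theorem MemLp.clm_apply_of_continuousOn [TopologicalSpace α] [OpensMeasurableSpace α]
    [SecondCountableTopology α] {E F : Type*} [NormedAddCommGroup E] [NormedSpace ℝ E]
    [NormedAddCommGroup F] [NormedSpace ℝ F] {s : Set α} (hs : IsCompact s)
    (hsm : MeasurableSet s) {φ : α → E →L[ℝ] F} (hφ : ContinuousOn φ s) {g : α → E}
    (hg : MemLp g p (μ.restrict s)) : MemLp (fun t => φ t (g t)) p (μ.restrict s) := by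
  obtain ⟨C, hC⟩ := hs.exists_bound_of_continuousOn hφ
  refine hg.of_le_mul (c := C) ?_ ?_
  · exact (ContinuousLinearMap.id ℝ (E →L[ℝ] F)).aestronglyMeasurable_comp₂
      (hφ.aestronglyMeasurable hsm) hg.1
  · filter_upwards [ae_restrict_mem hsm] with t ht
    exact (φ t).le_of_opNorm_le (hC t ht) _

theorem MemLp.matrix_mulVec_of_continuousOn [TopologicalSpace α] [OpensMeasurableSpace α]
    [SecondCountableTopology α] {m n : Type*} [Fintype m] [Fintype n] {s : Set α}
    (hs : IsCompact s) (hsm : MeasurableSet s) {A : α → Matrix m n ℝ} (hA : ContinuousOn A s)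
    {g : α → n → ℝ} (hg : MemLp g p (μ.restrict s)) :
    MemLp (fun t => A t *ᵥ g t) p (μ.restrict s) :=
  MemLp.clm_apply_of_continuousOn hs hsm
    (Matrix.continuous_toContinuousLinearMap_mulVecLin.comp_continuousOn hA) hg

theorem Lp.mem_range_constₗ_iff [IsFiniteMeasure μ] {E : Type*}
    [NormedAddCommGroup E] [NormedSpace ℝ E] {h : Lp E p μ} :
    h ∈ LinearMap.range (Lp.constₗ p μ ℝ) ↔ ∃ c : E, (h : α → E) =ᵐ[μ] fun _ => c := by
  rw [LinearMap.mem_range]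
  constructor
  · rintro ⟨c, rfl⟩
    exact ⟨c, Lp.coeFn_const p μ c⟩
  · rintro ⟨c, hc⟩
    exact ⟨c, Lp.ext ((Lp.coeFn_const p μ c).trans hc.symm)⟩

theorem Lp.eq_range_constₗ_of_mem_iff [IsFiniteMeasure μ] {E : Type*}
    [NormedAddCommGroup E] [NormedSpace ℝ E] {C : Submodule ℝ (Lp E p μ)}
    (hC : ∀ h : Lp E p μ, h ∈ C ↔ ∃ c : E, (h : α → E) =ᵐ[μ] fun _ => c) :
    C = LinearMap.range (Lp.constₗ p μ ℝ) := by
  ext h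
  rw [hC, Lp.mem_range_constₗ_iff]

variable {m n : Type*} [Fintype m] [Fintype n]

/-- `hA` is needed for additivity: the Bochner integral of a non-integrable function is `0`. -/
noncomputable def Lp.integralMulVecₗ (A : α → Matrix m n ℝ)
    (hA : ∀ h : Lp (n → ℝ) p μ, Integrable (fun t => A t *ᵥ h t) μ) :
    Lp (n → ℝ) p μ →ₗ[ℝ] m → ℝ where
  toFun h := ∫ t, A t *ᵥ h t ∂μ
  map_add' h₁ h₂ := by
    rw [← integral_add (hA h₁) (hA h₂)]
    refine integral_congr_ae ?_
    filter_upwards [Lp.coeFn_add h₁ h₂] with t ht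
    rw [ht, Pi.add_apply, Matrix.mulVec_add]
  map_smul' c h := by
    rw [RingHom.id_apply, ← integral_smul]
    refine integral_congr_ae ?_
    filter_upwards [Lp.coeFn_smul c h] with t ht
    rw [ht, Pi.smul_apply, Matrix.mulVec_smul]

theorem Lp.integralMulVecₗ_apply (A : α → Matrix m n ℝ)
    (hA : ∀ h : Lp (n → ℝ) p μ, Integrable (fun t => A t *ᵥ h t) μ) (h : Lp (n → ℝ) p μ) :
    Lp.integralMulVecₗ A hA h = ∫ t, A t *ᵥ h t ∂μ :=
  rfl

end Lp

theorem IntegrableOn.intervalIntegrable_of_mem_Icc {E : Type*}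
    [NormedAddCommGroup E] {a b : ℝ} {g : ℝ → E} (hg : IntegrableOn g (Icc a b)) {t : ℝ}
    (ht : t ∈ Icc a b) : IntervalIntegrable g volume a t :=
  (hg.mono_set (by rw [uIcc_of_le ht.1]; exact Icc_subset_Icc_right ht.2)).intervalIntegrable

theorem setIntegral_Icc_eq_intervalIntegral {E : Type*} [NormedAddCommGroup E] [NormedSpace ℝ E]
    {a b : ℝ} (hab : a ≤ b) (f : ℝ → E) : ∫ t in Icc a b, f t = ∫ t in a..b, f t := by
  rw [intervalIntegral.integral_of_le hab, integral_Icc_eq_integral_Ioc]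

end MeasureTheory

section Primitive

variable {E : Type*} [NormedAddCommGroup E] [NormedSpace ℝ E] {a b : ℝ}

noncomputable def primitiveOn (a b : ℝ) (g : ℝ → E) : ℝ → E :=
  (Icc a b).indicator fun t => ∫ s in a..t, g s

theorem primitiveOn_of_mem {g : ℝ → E} {t : ℝ} (ht : t ∈ Icc a b) :
    primitiveOn a b g t = ∫ s in a..t, g s :=
  indicator_of_mem ht _

theorem primitiveOn_of_notMem {g : ℝ → E} {t : ℝ} (ht : t ∉ Icc a b) : primitiveOn a b g t = 0 :=
  indicator_of_notMem ht _

theorem primitiveOn_add {g₁ g₂ : ℝ → E} (h₁ : IntegrableOn g₁ (Icc a b))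
    (h₂ : IntegrableOn g₂ (Icc a b)) :
    primitiveOn a b (g₁ + g₂) = primitiveOn a b g₁ + primitiveOn a b g₂ := by
  funext t
  by_cases ht : t ∈ Icc a b
  · simp only [Pi.add_apply, primitiveOn_of_mem ht]
    exact intervalIntegral.integral_add (h₁.intervalIntegrable_of_mem_Icc ht)
      (h₂.intervalIntegrable_of_mem_Icc ht)
  · simp only [Pi.add_apply, primitiveOn_of_notMem ht, add_zero]

theorem primitiveOn_smul (c : ℝ) (g : ℝ → E) :
    primitiveOn a b (c • g) = c • primitiveOn a b g := by
  simp only [primitiveOn, Pi.smul_apply, intervalIntegral.integral_smul]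
  exact indicator_const_smul _ _ _

theorem primitiveOn_congr_ae {g₁ g₂ : ℝ → E} (h : g₁ =ᵐ[volume.restrict (Icc a b)] g₂) :
    primitiveOn a b g₁ = primitiveOn a b g₂ := by
  funext t
  by_cases ht : t ∈ Icc a b
  · rw [primitiveOn_of_mem ht, primitiveOn_of_mem ht]
    refine intervalIntegral.integral_congr_ae ?_
    filter_upwards [(ae_restrict_iff' measurableSet_Icc).mp h] with s hs hst
    rw [uIoc_of_le ht.1] at hst
    exact hs ⟨hst.1.le, hst.2.trans ht.2⟩
  · rw [primitiveOn_of_notMem ht, primitiveOn_of_notMem ht]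

theorem eq_zero_of_primitiveOn_eq_zero [CompleteSpace E] {g : ℝ → E}
    (hg : ContinuousOn g (Icc a b)) (h0 : primitiveOn a b g = 0) {t : ℝ} (ht : t ∈ Ioo a b) :
    g t = 0 := by
  have hnhds : Icc a b ∈ 𝓝 t := Icc_mem_nhds ht.1 ht.2
  have hderiv : HasDerivAt (fun u => ∫ s in a..u, g s) (g t) t :=
    intervalIntegral.integral_hasDerivAt_right
      ((hg.integrableOn_compact isCompact_Icc).intervalIntegrable_of_mem_Icc
        (Ioo_subset_Icc_self ht))
      ⟨Icc a b, hnhds, hg.aestronglyMeasurable measurableSet_Icc⟩ (hg.continuousAt hnhds)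
  have hzero : (fun u => ∫ s in a..u, g s) =ᶠ[𝓝 t] fun _ => 0 := by
    filter_upwards [hnhds] with u hu
    rw [← primitiveOn_of_mem hu, h0, Pi.zero_apply]
  exact hderiv.unique ((hasDerivAt_const t 0).congr_of_eventuallyEq hzero)

end Primitive

theorem mem_H10_iff {r : ℕ} {a b : ℝ} (hab : a ≤ b) {f : ℝ → Fin r → ℝ} :
    f ∈ H10 r a b ↔ ∃ g : ℝ → Fin r → ℝ, MemLp g 2 (volume.restrict (Icc a b)) ∧
      ∫ t in a..b, g t = 0 ∧ f = primitiveOn a b g := by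
  constructor
  · rintro ⟨hout, hb, g, hg, -, hf⟩
    refine ⟨g, hg, by rw [← hf b (right_mem_Icc.mpr hab), hb], funext fun t => ?_⟩
    by_cases ht : t ∈ Icc a b
    · rw [primitiveOn_of_mem ht, hf t ht]
    · rw [primitiveOn_of_notMem ht, hout t ht]
  · rintro ⟨g, hg, hgb, rfl⟩
    have hint : IntegrableOn g (Icc a b) := hg.integrable one_le_two
    refine ⟨fun t ht => primitiveOn_of_notMem ht, ?_, g, hg,
      fun t ht => hint.intervalIntegrable_of_mem_Icc ht, fun t ht => primitiveOn_of_mem ht⟩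
    rw [primitiveOn_of_mem (right_mem_Icc.mpr hab), hgb]

section ReducedOperator

variable {r : ℕ} {a b : ℝ}

local notation "μ" => volume.restrict (Icc a b)

local notation "Const" => LinearMap.range (Lp.constₗ 2 μ ℝ : (Fin r → ℝ) →ₗ[ℝ] Lp (Fin r → ℝ) 2 μ)

def IsReducedOperator (𝔅 : ℝ → Matrix (Fin r) (Fin r) ℝ)
    (T : H10 r a b →ₗ[ℝ] (Lp (Fin r → ℝ) 2 μ ⧸ Const)) : Prop :=
  ∀ (f : H10 r a b) (g : ℝ → Fin r → ℝ), MemLp g 2 μ →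
    (∀ t ∈ Icc a b, (f : ℝ → Fin r → ℝ) t = ∫ s in a..t, g s) →
    ∀ hBg : MemLp (fun t => 𝔅 t *ᵥ g t) 2 μ, T f = Submodule.Quotient.mk (hBg.toLp _)

variable {𝔅 : ℝ → Matrix (Fin r) (Fin r) ℝ}
  {T : H10 r a b →ₗ[ℝ] (Lp (Fin r → ℝ) 2 (volume.restrict (Icc a b)) ⧸
    LinearMap.range (Lp.constₗ 2 (volume.restrict (Icc a b)) ℝ :
      (Fin r → ℝ) →ₗ[ℝ] Lp (Fin r → ℝ) 2 (volume.restrict (Icc a b))))}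

theorem IsReducedOperator.apply_eq (hT : IsReducedOperator 𝔅 T)
    (hcont : ContinuousOn 𝔅 (Icc a b)) {f : H10 r a b} {g : ℝ → Fin r → ℝ} (hg : MemLp g 2 μ)
    (hf : (f : ℝ → Fin r → ℝ) = primitiveOn a b g) :
    T f = Submodule.Quotient.mk
      ((hg.matrix_mulVec_of_continuousOn isCompact_Icc measurableSet_Icc hcont).toLp _) :=
  hT f g hg (fun t ht => by rw [hf, primitiveOn_of_mem ht]) _

theorem memLp_nonsing_inv_mulVec (hcont : ContinuousOn 𝔅 (Icc a b))
    (hinv : ∀ t ∈ Icc a b, IsUnit (𝔅 t)) {g : ℝ → Fin r → ℝ} (hg : MemLp g 2 μ) :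
    MemLp (fun t => (𝔅 t)⁻¹ *ᵥ g t) 2 μ :=
  hg.matrix_mulVec_of_continuousOn isCompact_Icc measurableSet_Icc (hcont.matrix_nonsing_inv hinv)

theorem integrable_nonsing_inv_mulVec (hcont : ContinuousOn 𝔅 (Icc a b))
    (hinv : ∀ t ∈ Icc a b, IsUnit (𝔅 t)) (h : Lp (Fin r → ℝ) 2 μ) :
    Integrable (fun t => (𝔅 t)⁻¹ *ᵥ h t) μ :=
  (memLp_nonsing_inv_mulVec hcont hinv (Lp.memLp h)).integrable one_le_two

noncomputable def integralInvMulVecₗ (hcont : ContinuousOn 𝔅 (Icc a b))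
    (hinv : ∀ t ∈ Icc a b, IsUnit (𝔅 t)) : Lp (Fin r → ℝ) 2 μ →ₗ[ℝ] Fin r → ℝ :=
  Lp.integralMulVecₗ (fun t => (𝔅 t)⁻¹) (integrable_nonsing_inv_mulVec hcont hinv)

/-- The map `c ↦ (∫ₐᵇ 𝔅⁻¹) c`, defined through the constant functions so that `Const` is visibly
sent into its range by `integralInvMulVecₗ`. -/
noncomputable def integralInvₗ (hcont : ContinuousOn 𝔅 (Icc a b))
    (hinv : ∀ t ∈ Icc a b, IsUnit (𝔅 t)) : (Fin r → ℝ) →ₗ[ℝ] Fin r → ℝ :=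
  integralInvMulVecₗ hcont hinv ∘ₗ Lp.constₗ 2 μ ℝ

theorem integralInvMulVecₗ_eq_intervalIntegral (hab : a ≤ b) (hcont : ContinuousOn 𝔅 (Icc a b))
    (hinv : ∀ t ∈ Icc a b, IsUnit (𝔅 t)) {k : Lp (Fin r → ℝ) 2 μ} {g : ℝ → Fin r → ℝ}
    (hk : k =ᵐ[μ] fun t => 𝔅 t *ᵥ g t) :
    integralInvMulVecₗ hcont hinv k = ∫ t in a..b, g t := by
  rw [integralInvMulVecₗ, Lp.integralMulVecₗ_apply, ← setIntegral_Icc_eq_intervalIntegral hab]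
  refine integral_congr_ae ?_
  filter_upwards [hk, ae_restrict_mem measurableSet_Icc] with t hkt ht
  rw [hkt, Matrix.nonsing_inv_mulVec_mulVec (hinv t ht)]

theorem integralInvₗ_apply (hab : a ≤ b) (hcont : ContinuousOn 𝔅 (Icc a b))
    (hinv : ∀ t ∈ Icc a b, IsUnit (𝔅 t)) (c : Fin r → ℝ) :
    integralInvₗ hcont hinv c = ∫ t in a..b, (𝔅 t)⁻¹ *ᵥ c := by
  refine integralInvMulVecₗ_eq_intervalIntegral hab hcont hinv ?_
  filter_upwards [Lp.coeFn_const 2 μ c, ae_restrict_mem measurableSet_Icc] with t hct ht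
  rw [Lp.constₗ_apply, hct, Function.const_apply, Matrix.mulVec_nonsing_inv_mulVec (hinv t ht)]

theorem primitiveOn_inv_mulVec_mem_H10 (hab : a ≤ b) (hcont : ContinuousOn 𝔅 (Icc a b))
    (hinv : ∀ t ∈ Icc a b, IsUnit (𝔅 t)) {c : Fin r → ℝ}
    (hc : c ∈ LinearMap.ker (integralInvₗ hcont hinv)) :
    primitiveOn a b (fun t => (𝔅 t)⁻¹ *ᵥ c) ∈ H10 r a b :=
  (mem_H10_iff hab).mpr ⟨_, memLp_nonsing_inv_mulVec hcont hinv (memLp_const c),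
    by rw [← integralInvₗ_apply hab]; exact hc, rfl⟩

noncomputable def kerPrimitive (hab : a ≤ b) (hcont : ContinuousOn 𝔅 (Icc a b))
    (hinv : ∀ t ∈ Icc a b, IsUnit (𝔅 t)) :
    LinearMap.ker (integralInvₗ hcont hinv) →ₗ[ℝ] H10 r a b where
  toFun c := ⟨_, primitiveOn_inv_mulVec_mem_H10 hab hcont hinv c.2⟩
  map_add' c d := Subtype.ext <| by
    have hint : ∀ v : Fin r → ℝ, IntegrableOn (fun t => (𝔅 t)⁻¹ *ᵥ v) (Icc a b) := fun v =>
      (memLp_nonsing_inv_mulVec hcont hinv (memLp_const v)).integrable one_le_two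
    simp only [Submodule.coe_add, Matrix.mulVec_add]
    exact primitiveOn_add (hint c) (hint d)
  map_smul' s c := Subtype.ext <| by
    simp only [SetLike.val_smul, Matrix.mulVec_smul, RingHom.id_apply]
    exact primitiveOn_smul s _

theorem apply_kerPrimitive_eq_zero (hab : a ≤ b) (hcont : ContinuousOn 𝔅 (Icc a b))
    (hinv : ∀ t ∈ Icc a b, IsUnit (𝔅 t)) (hT : IsReducedOperator 𝔅 T)
    (c : LinearMap.ker (integralInvₗ hcont hinv)) : T (kerPrimitive hab hcont hinv c) = 0 := by
  rw [hT.apply_eq hcont (memLp_nonsing_inv_mulVec hcont hinv (memLp_const _)) rfl,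
    Submodule.Quotient.mk_eq_zero, Lp.mem_range_constₗ_iff]
  refine ⟨c, (MemLp.coeFn_toLp _).trans ?_⟩
  filter_upwards [ae_restrict_mem measurableSet_Icc] with t ht
  exact Matrix.mulVec_nonsing_inv_mulVec (hinv t ht) _

theorem kerPrimitive_injective (hab : a < b) (hcont : ContinuousOn 𝔅 (Icc a b))
    (hinv : ∀ t ∈ Icc a b, IsUnit (𝔅 t)) :
    Function.Injective (kerPrimitive hab.le hcont hinv) := by
  refine (injective_iff_map_eq_zero _).mpr fun c hc => ?_
  have hmid : (a + b) / 2 ∈ Ioo a b := ⟨by linarith, by linarith⟩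
  have hcont_c : ContinuousOn (fun t => (𝔅 t)⁻¹ *ᵥ (c : Fin r → ℝ)) (Icc a b) :=
    (continuous_id.matrix_mulVec continuous_const).comp_continuousOn
      (hcont.matrix_nonsing_inv hinv)
  have h0 := eq_zero_of_primitiveOn_eq_zero hcont_c (congrArg Subtype.val hc) hmid
  have hc0 := Matrix.mulVec_nonsing_inv_mulVec (hinv _ (Ioo_subset_Icc_self hmid)) (c : Fin r → ℝ)
  rw [h0, Matrix.mulVec_zero] at hc0
  exact Subtype.ext hc0.symm

theorem exists_kerPrimitive_eq (hab : a ≤ b) (hcont : ContinuousOn 𝔅 (Icc a b))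
    (hinv : ∀ t ∈ Icc a b, IsUnit (𝔅 t)) (hT : IsReducedOperator 𝔅 T) {f : H10 r a b}
    (hf : T f = 0) : ∃ c, kerPrimitive hab hcont hinv c = f := by
  obtain ⟨g, hg, hgb, hfg⟩ := (mem_H10_iff hab).mp f.2
  rw [hT.apply_eq hcont hg hfg, Submodule.Quotient.mk_eq_zero, Lp.mem_range_constₗ_iff] at hf
  obtain ⟨c, hc⟩ := hf
  have hgc : g =ᵐ[μ] fun t => (𝔅 t)⁻¹ *ᵥ c := by
    filter_upwards [(MemLp.coeFn_toLp _).symm.trans hc, ae_restrict_mem measurableSet_Icc]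
      with t hct ht
    rw [← hct, Matrix.nonsing_inv_mulVec_mulVec (hinv t ht)]
  have hprim := primitiveOn_congr_ae hgc
  refine ⟨⟨c, ?_⟩, Subtype.ext (hfg.trans hprim).symm⟩
  rw [LinearMap.mem_ker, integralInvₗ_apply hab, ← primitiveOn_of_mem (right_mem_Icc.mpr hab),
    ← hprim, primitiveOn_of_mem (right_mem_Icc.mpr hab), hgb]

noncomputable def kerEquiv (hab : a < b) (hcont : ContinuousOn 𝔅 (Icc a b))
    (hinv : ∀ t ∈ Icc a b, IsUnit (𝔅 t)) (hT : IsReducedOperator 𝔅 T) :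
    LinearMap.ker (integralInvₗ hcont hinv) ≃ₗ[ℝ] LinearMap.ker T :=
  LinearEquiv.ofBijective
    ((kerPrimitive hab.le hcont hinv).codRestrict _
      (apply_kerPrimitive_eq_zero hab.le hcont hinv hT))
    ⟨fun _ _ h => kerPrimitive_injective hab hcont hinv (congrArg Subtype.val h),
      fun f => (exists_kerPrimitive_eq hab.le hcont hinv hT f.2).imp fun _ hc => Subtype.ext hc⟩

theorem integralInvMulVecₗ_surjective (hab : a < b) (hcont : ContinuousOn 𝔅 (Icc a b))
    (hinv : ∀ t ∈ Icc a b, IsUnit (𝔅 t)) :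
    Function.Surjective (integralInvMulVecₗ hcont hinv) := by
  intro v
  have hg : MemLp (fun t => 𝔅 t *ᵥ (b - a)⁻¹ • v) 2 μ :=
    (memLp_const _).matrix_mulVec_of_continuousOn isCompact_Icc measurableSet_Icc hcont
  refine ⟨hg.toLp _, ?_⟩
  rw [integralInvMulVecₗ_eq_intervalIntegral hab.le hcont hinv (MemLp.coeFn_toLp hg),
    intervalIntegral.integral_const, smul_smul, mul_inv_cancel₀ (sub_ne_zero.mpr hab.ne'),
    one_smul]

theorem mem_range_of_integralInvMulVecₗ_eq_zero (hab : a ≤ b) (hcont : ContinuousOn 𝔅 (Icc a b))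
    (hinv : ∀ t ∈ Icc a b, IsUnit (𝔅 t)) (hT : IsReducedOperator 𝔅 T)
    {k : Lp (Fin r → ℝ) 2 μ} (hk : integralInvMulVecₗ hcont hinv k = 0) :
    Submodule.Quotient.mk k ∈ LinearMap.range T := by
  have hg := memLp_nonsing_inv_mulVec hcont hinv (Lp.memLp k)
  have hgb : ∫ t in a..b, (𝔅 t)⁻¹ *ᵥ k t = 0 := by
    rw [← setIntegral_Icc_eq_intervalIntegral hab]
    exact hk
  refine ⟨⟨_, (mem_H10_iff hab).mpr ⟨_, hg, hgb, rfl⟩⟩, ?_⟩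
  rw [hT.apply_eq hcont hg rfl]
  congr 1
  refine Lp.ext ((MemLp.coeFn_toLp _).trans ?_)
  filter_upwards [ae_restrict_mem measurableSet_Icc] with t ht
  exact Matrix.mulVec_nonsing_inv_mulVec (hinv t ht) _

noncomputable def cokerMap (hcont : ContinuousOn 𝔅 (Icc a b))
    (hinv : ∀ t ∈ Icc a b, IsUnit (𝔅 t)) :
    (Lp (Fin r → ℝ) 2 μ ⧸ Const) →ₗ[ℝ] (Fin r → ℝ) ⧸ LinearMap.range (integralInvₗ hcont hinv) :=
  Submodule.mapQ _ _ (integralInvMulVecₗ hcont hinv)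
    (Submodule.map_le_iff_le_comap.mp (LinearMap.range_comp _ _).ge)

theorem cokerMap_surjective (hab : a < b) (hcont : ContinuousOn 𝔅 (Icc a b))
    (hinv : ∀ t ∈ Icc a b, IsUnit (𝔅 t)) : Function.Surjective (cokerMap hcont hinv) := by
  rw [← LinearMap.range_eq_top, cokerMap, Submodule.range_mapQ,
    LinearMap.range_eq_top.mpr (integralInvMulVecₗ_surjective hab hcont hinv), Submodule.map_top,
    Submodule.range_mkQ]

theorem ker_cokerMap (hab : a ≤ b) (hcont : ContinuousOn 𝔅 (Icc a b))
    (hinv : ∀ t ∈ Icc a b, IsUnit (𝔅 t)) (hT : IsReducedOperator 𝔅 T) :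
    LinearMap.ker (cokerMap hcont hinv) = LinearMap.range T := by
  apply le_antisymm
  · intro x hx
    obtain ⟨h, rfl⟩ := Submodule.mkQ_surjective _ x
    rw [LinearMap.mem_ker, Submodule.mkQ_apply, cokerMap, Submodule.mapQ_apply,
      Submodule.Quotient.mk_eq_zero] at hx
    obtain ⟨c, hc⟩ := hx
    have hk : integralInvMulVecₗ hcont hinv (h - Lp.constₗ 2 μ ℝ c) = 0 := by
      rw [map_sub, sub_eq_zero]
      exact hc.symm
    have hconst : (Submodule.Quotient.mk (Lp.constₗ 2 μ ℝ c) : Lp (Fin r → ℝ) 2 μ ⧸ Const) = 0 :=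
      (Submodule.Quotient.mk_eq_zero _).mpr (LinearMap.mem_range_self _ c)
    simpa only [Submodule.mkQ_apply, Submodule.Quotient.mk_sub, hconst, sub_zero] using
      mem_range_of_integralInvMulVecₗ_eq_zero hab hcont hinv hT hk
  · rintro _ ⟨f, rfl⟩
    obtain ⟨g, hg, hgb, hfg⟩ := (mem_H10_iff hab).mp f.2
    rw [LinearMap.mem_ker, hT.apply_eq hcont hg hfg, cokerMap, Submodule.mapQ_apply,
      integralInvMulVecₗ_eq_intervalIntegral hab hcont hinv (MemLp.coeFn_toLp _), hgb,
      Submodule.Quotient.mk_zero]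

noncomputable def cokerEquiv (hab : a < b) (hcont : ContinuousOn 𝔅 (Icc a b))
    (hinv : ∀ t ∈ Icc a b, IsUnit (𝔅 t)) (hT : IsReducedOperator 𝔅 T) :
    ((Lp (Fin r → ℝ) 2 μ ⧸ Const) ⧸ LinearMap.range T) ≃ₗ[ℝ]
      (Fin r → ℝ) ⧸ LinearMap.range (integralInvₗ hcont hinv) :=
  (Submodule.quotEquivOfEq _ _ (ker_cokerMap hab.le hcont hinv hT).symm).trans
    ((cokerMap hcont hinv).quotKerEquivOfSurjective (cokerMap_surjective hab hcont hinv))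

end ReducedOperator

theorem reduced_operator_fredholm_index_zero_general (r : ℕ) (a b : ℝ) (hab : a < b)
    (𝔅 : ℝ → Matrix (Fin r) (Fin r) ℝ)
    (hcont : ContinuousOn 𝔅 (Set.Icc a b))
    (hinv : ∀ t ∈ Set.Icc a b, IsUnit (𝔅 t))
    (Const : Submodule ℝ (Lp (Fin r → ℝ) 2 (volume.restrict (Set.Icc a b))))
    (hConst : ∀ h : Lp (Fin r → ℝ) 2 (volume.restrict (Set.Icc a b)),
      h ∈ Const ↔ ∃ c : Fin r → ℝ,
        (h : ℝ → Fin r → ℝ) =ᵐ[volume.restrict (Set.Icc a b)] fun _ => c)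
    (T : ↥(H10 r a b) →ₗ[ℝ]
      (Lp (Fin r → ℝ) 2 (volume.restrict (Set.Icc a b)) ⧸ Const))
    (hT : ∀ (f : ↥(H10 r a b)) (g : ℝ → Fin r → ℝ),
      MemLp g 2 (volume.restrict (Set.Icc a b)) →
      (∀ t ∈ Set.Icc a b, (f : ℝ → Fin r → ℝ) t = ∫ s in a..t, g s) →
      ∀ hBg : MemLp (fun t => (𝔅 t).mulVec (g t)) 2 (volume.restrict (Set.Icc a b)),
        T f = Submodule.Quotient.mk (MemLp.toLp _ hBg)) :
    FiniteDimensional ℝ (LinearMap.ker T) ∧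
    FiniteDimensional ℝ
      ((Lp (Fin r → ℝ) 2 (volume.restrict (Set.Icc a b)) ⧸ Const) ⧸ LinearMap.range T) ∧
    Module.finrank ℝ (LinearMap.ker T) =
      Module.finrank ℝ
        ((Lp (Fin r → ℝ) 2 (volume.restrict (Set.Icc a b)) ⧸ Const) ⧸
          LinearMap.range T) := by
  obtain rfl := Lp.eq_range_constₗ_of_mem_iff hConst
  let e₁ := kerEquiv hab hcont hinv hT
  let e₂ := cokerEquiv hab hcont hinv hT
  refine ⟨Module.Finite.equiv e₁, Module.Finite.equiv e₂.symm, ?_⟩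
  rw [← e₁.finrank_eq, e₂.finrank_eq]
  exact (integralInvₗ hcont hinv).finrank_ker_eq_finrank_quotient_range

/-- for a continuous family `𝔅(t)` of invertible symmetric maps, the
operator `T : H¹₀ → L²/Const`, `T(f) = 𝔅 f' mod Const`, is a Fredholm operator of
index zero: its kernel and cokernel are finite dimensional of the same dimension. -/
theorem reduced_operator_fredholm_index_zero (r : ℕ) (a b : ℝ) (hab : a < b)
    (𝔅 : ℝ → Matrix (Fin r) (Fin r) ℝ)
    (hcont : ContinuousOn 𝔅 (Set.Icc a b))
    (hsym : ∀ t ∈ Set.Icc a b, (𝔅 t)ᵀ = 𝔅 t)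
    (hinv : ∀ t ∈ Set.Icc a b, IsUnit (𝔅 t))
    (Const : Submodule ℝ (Lp (Fin r → ℝ) 2 (volume.restrict (Set.Icc a b))))
    (hConst : ∀ h : Lp (Fin r → ℝ) 2 (volume.restrict (Set.Icc a b)),
      h ∈ Const ↔ ∃ c : Fin r → ℝ,
        (h : ℝ → Fin r → ℝ) =ᵐ[volume.restrict (Set.Icc a b)] fun _ => c)
    (T : ↥(H10 r a b) →ₗ[ℝ]
      (Lp (Fin r → ℝ) 2 (volume.restrict (Set.Icc a b)) ⧸ Const))
    (hT : ∀ (f : ↥(H10 r a b)) (g : ℝ → Fin r → ℝ),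
      MemLp g 2 (volume.restrict (Set.Icc a b)) →
      (∀ t ∈ Set.Icc a b, (f : ℝ → Fin r → ℝ) t = ∫ s in a..t, g s) →
      ∀ hBg : MemLp (fun t => (𝔅 t).mulVec (g t)) 2 (volume.restrict (Set.Icc a b)),
        T f = Submodule.Quotient.mk (MemLp.toLp _ hBg)) :
    FiniteDimensional ℝ (LinearMap.ker T) ∧
    FiniteDimensional ℝ
      ((Lp (Fin r → ℝ) 2 (volume.restrict (Set.Icc a b)) ⧸ Const) ⧸ LinearMap.range T) ∧
    Module.finrank ℝ (LinearMap.ker T) =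
      Module.finrank ℝ
        ((Lp (Fin r → ℝ) 2 (volume.restrict (Set.Icc a b)) ⧸ Const) ⧸
          LinearMap.range T) :=
  reduced_operator_fredholm_index_zero_general r a b hab 𝔅 hcont hinv Const hConst T hT
end
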